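/- arXiv:2301.02036 — 5 statements merged into one kernel-verified Lean document; each statement's English description precedes it below -/
import Mathlib

section
/- Let α and β be commuting symmetric real n×n matrices. Then there exists δ > 0 such that for all ε with 0 < ε < δ, ker(α + ε·β) = ker α ∩ ker β. -/
/-!
The kernel `K` of `α + ε • β` is `β`-invariant because `α` and `β` commute, and `β` restricted
to `K` is symmetric. An eigenvector `v ∈ K` of `β` with eigenvalue `ν` satisfies
`α v = -(ε ν) v`, so as soon as `ε` avoids the finitely many ratios `-μ / ν` of eigenvalues
(`ν ≠ 0`), every eigenvalue of `β` on `K` vanishes. By the spectral theorem `β` is then zero on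
`K`, hence so is `α`. Small positive `ε` avoid this finite set.
-/

open Matrix

namespace LinearMap.IsSymmetric

variable {𝕜 E : Type*} [RCLike 𝕜] [NormedAddCommGroup E] [InnerProductSpace 𝕜 E]
  [FiniteDimensional 𝕜 E]

theorem eq_zero_of_forall_hasEigenvalue_eq_zero {T : E →ₗ[𝕜] E} (hT : T.IsSymmetric)
    (h : ∀ μ, Module.End.HasEigenvalue T μ → μ = 0) : T = 0 := by
  refine (hT.eigenvectorBasis rfl).toBasis.ext fun i => ?_
  rw [OrthonormalBasis.coe_toBasis, hT.apply_eigenvectorBasis,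
    h _ (hT.hasEigenvalue_eigenvalues rfl i), zero_smul, zero_apply]

end LinearMap.IsSymmetric

namespace Module.End

variable {𝕜 E : Type*} [RCLike 𝕜] [NormedAddCommGroup E] [InnerProductSpace 𝕜 E]
  [FiniteDimensional 𝕜 E] {A B : Module.End 𝕜 E}

open LinearMap

theorem ker_add_smul_eq_inf_ker (hB : B.IsSymmetric) (hAB : Commute A B) {ε : 𝕜}
    (hε : ∀ μ ν, A.HasEigenvalue μ → B.HasEigenvalue ν → μ + ε * ν = 0 → ν = 0) :
    ker (A + ε • B) = ker A ⊓ ker B := by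
  have hK : ∀ v ∈ ker (A + ε • B), B v ∈ ker (A + ε • B) := fun v hv => by
    have hcomm : Commute (A + ε • B) B := hAB.add_left ((Commute.refl B).smul_left ε)
    rw [mem_ker, ← mul_apply, hcomm.eq, mul_apply, mem_ker.1 hv, map_zero]
  have hBK : B.restrict hK = 0 := by
    refine (hB.restrict_invariant hK).eq_zero_of_forall_hasEigenvalue_eq_zero fun ν hν => ?_
    obtain ⟨⟨v, hvK⟩, hv⟩ := hν.exists_hasEigenvector
    have hBv : B v = ν • v := congrArg Subtype.val (mem_eigenspace_iff.1 hv.1)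
    have hAv : A v = (-(ε * ν)) • v := by
      have hv0 : A v + ε • B v = 0 := hvK
      rw [hBv, smul_smul] at hv0
      rw [neg_smul, eq_neg_of_add_eq_zero_left hv0]
    have hv0 : v ≠ 0 := fun h => hv.2 (Subtype.ext h)
    exact hε _ ν (hasEigenvalue_of_hasEigenvector ⟨mem_eigenspace_iff.2 hAv, hv0⟩)
      (hasEigenvalue_of_hasEigenvector ⟨mem_eigenspace_iff.2 hBv, hv0⟩) (by ring)
  ext x
  simp only [Submodule.mem_inf, mem_ker, LinearMap.add_apply, LinearMap.smul_apply]
  constructor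
  · intro hx
    have hBx : B x = 0 := congrArg Subtype.val (LinearMap.congr_fun hBK ⟨x, hx⟩)
    rw [hBx, smul_zero, add_zero] at hx
    exact ⟨hx, hBx⟩
  · rintro ⟨hAx, hBx⟩
    rw [hAx, hBx, smul_zero, add_zero]

theorem eventually_cofinite_ker_add_smul_eq_inf_ker (hB : B.IsSymmetric) (hAB : Commute A B) :
    ∀ᶠ ε : 𝕜 in Filter.cofinite, ker (A + ε • B) = ker A ⊓ ker B := by
  refine Filter.eventually_cofinite.2 <|
    (A.finite_hasEigenvalue.image2 (fun μ ν => -μ / ν) B.finite_hasEigenvalue).subset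
      fun ε hε => ?_
  by_contra hbad
  refine hε (ker_add_smul_eq_inf_ker hB hAB fun μ ν hμ hν hμν => ?_)
  by_contra hν0
  refine hbad ⟨μ, hμ, ν, hν, ?_⟩
  rw [div_eq_iff hν0]
  linear_combination -hμν

end Module.End

namespace Matrix

variable {𝕜 : Type*} [RCLike 𝕜] {m n : Type*} [Fintype n] [DecidableEq n]

theorem ker_toEuclideanLin (M : Matrix m n 𝕜) :
    LinearMap.ker (toEuclideanLin M) =
      (LinearMap.ker M.mulVecLin).comap (WithLp.linearEquiv 2 𝕜 (n → 𝕜)).toLinearMap := by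
  ext x
  simp [toLpLin_apply]

theorem eventually_cofinite_ker_add_smul_eq_inf_ker {α β : Matrix n n 𝕜} (hβ : β.IsHermitian)
    (hαβ : Commute α β) :
    ∀ᶠ ε : 𝕜 in Filter.cofinite, LinearMap.ker (α + ε • β).mulVecLin =
      LinearMap.ker α.mulVecLin ⊓ LinearMap.ker β.mulVecLin := by
  refine (Module.End.eventually_cofinite_ker_add_smul_eq_inf_ker
    (isSymmetric_toEuclideanLin_iff.2 hβ) (hαβ.map (toLpLinAlgEquiv 2))).mono fun ε hε => ?_
  apply Submodule.comap_injective_of_surjective (WithLp.linearEquiv 2 𝕜 (n → 𝕜)).surjective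
  rw [Submodule.comap_inf, ← ker_toEuclideanLin, ← ker_toEuclideanLin, ← ker_toEuclideanLin,
    map_add, map_smul]
  exact hε

end Matrix

theorem stmt_0_general (n : ℕ) (α β : Matrix (Fin n) (Fin n) ℝ)
    (hβ : βᵀ = β) (hcomm : α * β = β * α) :
    ∃ δ > (0 : ℝ), ∀ ε : ℝ, 0 < ε → ε < δ →
      LinearMap.ker (α + ε • β).mulVecLin =
        LinearMap.ker α.mulVecLin ⊓ LinearMap.ker β.mulVecLin := by
  have hgood := (eventually_cofinite_ker_add_smul_eq_inf_ker (isHermitian_iff_isSymm.2 hβ)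
    hcomm).filter_mono ((nhdsGT_le_nhdsNE 0).trans (nhdsNE_le_cofinite 0))
  obtain ⟨δ, hδ, h⟩ := (nhdsGT_basis (0 : ℝ)).eventually_iff.1 hgood
  exact ⟨δ, hδ, fun ε hε₀ hεδ => h ⟨hε₀, hεδ⟩⟩

theorem stmt_0 (n : ℕ) (α β : Matrix (Fin n) (Fin n) ℝ)
    (hα : αᵀ = α) (hβ : βᵀ = β) (hcomm : α * β = β * α) :
    ∃ δ > (0 : ℝ), ∀ ε : ℝ, 0 < ε → ε < δ →
      LinearMap.ker (α + ε • β).mulVecLin =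
        LinearMap.ker α.mulVecLin ⊓ LinearMap.ker β.mulVecLin :=
  stmt_0_general n α β hβ hcomm
end

section
/- Let α, β be commuting symmetric negative semidefinite real n×n matrices. For x ∈ ℝⁿ set y = lim_{t→∞} exp(tα)x and z = lim_{t→∞} exp(tβ)y. Then z equals the orthogonal projection of x onto ker α ∩ ker β, and moreover lim_{t→∞} exp(t(α+β))x = z. -/
/-! Diagonalising a symmetric negative semidefinite `A` shows that `exp (t • A) x` converges.
Its limit `y` is fixed by the flow, hence lies in `ker A`, and `x - y ⊥ ker A` because
`exp (t • A)` is symmetric and fixes `ker A` pointwise: the limit is the orthogonal projection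
of `x` onto `ker A`. As `α` and `β` commute, the flow of `β` preserves `ker α`, so
`z ∈ ker α ∩ ker β`, and `x - z = (x - y) + (y - z)` is orthogonal to `ker α ∩ ker β`.
For negative semidefinite `α, β` we have `ker (α + β) = ker α ∩ ker β`, so the flow of `α + β`
converges to the same projection. -/

open Matrix Filter Topology

theorem Unitary.continuous_conjStarAlgAut {S R : Type*} [Semiring R] [StarMul R] [SMul S R]
    [IsScalarTower S R R] [SMulCommClass S R R] [TopologicalSpace R] [IsTopologicalSemiring R]
    (u : unitary R) : Continuous (conjStarAlgAut S R u) :=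
  (continuous_const.mul continuous_id).mul continuous_const

theorem Real.tendsto_exp_mul_atTop_of_nonpos {c : ℝ} (hc : c ≤ 0) :
    Tendsto (fun t => Real.exp (t * c)) atTop (𝓝 (if c = 0 then 1 else 0)) := by
  rcases hc.lt_or_eq with hc | rfl
  · rw [if_neg hc.ne]
    exact Real.tendsto_exp_atBot.comp (tendsto_id.atTop_mul_const_of_neg hc)
  · simp

namespace Matrix

variable {m : Type*} [Fintype m]

open scoped ComplexOrder in
theorem PosSemidef.add_mulVec_eq_zero_iff {𝕜 : Type*} [RCLike 𝕜] {P Q : Matrix m m 𝕜}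
    (hP : P.PosSemidef) (hQ : Q.PosSemidef) {v : m → 𝕜} :
    (P + Q) *ᵥ v = 0 ↔ P *ᵥ v = 0 ∧ Q *ᵥ v = 0 := by
  rw [← hP.dotProduct_mulVec_zero_iff, ← hQ.dotProduct_mulVec_zero_iff,
    ← (hP.add hQ).dotProduct_mulVec_zero_iff, add_mulVec, dotProduct_add]
  exact add_eq_zero_iff_of_nonneg (hP.dotProduct_mulVec_nonneg v) (hQ.dotProduct_mulVec_nonneg v)

theorem eq_of_forall_sub_dotProduct_eq_zero {R : Type*} [CommRing R] [LinearOrder R]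
    [IsStrictOrderedRing R] {K : Submodule R (m → R)} {x z z' : m → R} (hz : z ∈ K) (hz' : z' ∈ K)
    (h : ∀ w ∈ K, (x - z) ⬝ᵥ w = 0) (h' : ∀ w ∈ K, (x - z') ⬝ᵥ w = 0) : z = z' := by
  have hw := K.sub_mem hz' hz
  have hself : (z' - z) ⬝ᵥ (z' - z) = 0 :=
    calc (z' - z) ⬝ᵥ (z' - z) = ((x - z) - (x - z')) ⬝ᵥ (z' - z) := by
          rw [sub_sub_sub_cancel_left]
      _ = 0 := by rw [sub_dotProduct, h _ hw, h' _ hw, sub_zero]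
  exact (sub_eq_zero.mp (dotProduct_self_eq_zero.mp hself)).symm

variable [DecidableEq m]

open scoped ComplexOrder in
theorem IsHermitian.eigenvalues_nonpos {𝕜 : Type*} [RCLike 𝕜] {A : Matrix m m 𝕜}
    (hA : A.IsHermitian) (hA' : (-A).PosSemidef) (i : m) : hA.eigenvalues i ≤ 0 := by
  have h := RCLike.nonneg_iff.mp (hA'.dotProduct_mulVec_nonneg (hA.eigenvectorBasis i))
  rw [hA.eigenvalues_eq]
  simpa only [neg_mulVec, dotProduct_neg, map_neg, neg_nonneg] using h.1

theorem hasDerivAt_exp_smul_mulVec (A : Matrix m m ℝ) (v : m → ℝ) (t : ℝ) :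
    HasDerivAt (fun s : ℝ => NormedSpace.exp (s • A) *ᵥ v)
      (NormedSpace.exp (t • A) *ᵥ (A *ᵥ v)) t := by
  rw [mulVec_mulVec]
  -- `NormedSpace.exp` depends only on the topology, so any matrix norm may be used here.
  open scoped Norms.Operator in
  exact (((mulVecBilin ℝ ℝ).flip v).toContinuousLinearMap.hasFDerivAt).comp_hasDerivAt t
    (hasDerivAt_exp_smul_const A t)

theorem exp_smul_mulVec_eq_self {A : Matrix m m ℝ} {v : m → ℝ} (hv : A *ᵥ v = 0) (t : ℝ) :
    NormedSpace.exp (t • A) *ᵥ v = v := by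
  have hderiv (s : ℝ) : HasDerivAt (fun s : ℝ => NormedSpace.exp (s • A) *ᵥ v) 0 s := by
    simpa only [hv, mulVec_zero] using hasDerivAt_exp_smul_mulVec A v s
  simpa using is_const_of_deriv_eq_zero (fun s => (hderiv s).differentiableAt)
    (fun s => (hderiv s).deriv) t 0

theorem exp_smul_eq_conj_diagonal {A : Matrix m m ℝ} (hA : A.IsHermitian) (t : ℝ) :
    NormedSpace.exp (t • A) = Unitary.conjStarAlgAut ℝ _ hA.eigenvectorUnitary
      (diagonal fun i => Real.exp (t * hA.eigenvalues i)) := by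
  set φ := Unitary.conjStarAlgAut ℝ (Matrix m m ℝ) hA.eigenvectorUnitary
  have hdiag : t • A = φ (diagonal fun i => t * hA.eigenvalues i) := by
    conv_lhs => rw [hA.spectral_theorem]
    rw [← map_smul, ← diagonal_smul]
    rfl
  rw [hdiag]
  open scoped Norms.Operator in
  exact (NormedSpace.map_exp φ (Unitary.continuous_conjStarAlgAut _) _).symm.trans <|
    congr_arg φ <| (exp_diagonal _).trans (by simp only [Pi.exp_def, Real.exp_eq_exp_ℝ])

theorem exists_tendsto_exp_smul {A : Matrix m m ℝ} (hA : (-A).PosSemidef) :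
    ∃ P, Tendsto (fun t : ℝ => NormedSpace.exp (t • A)) atTop (𝓝 P) := by
  have hA' : A.IsHermitian := isHermitian_neg_iff.mp hA.isHermitian
  have hφ := Unitary.continuous_conjStarAlgAut (S := ℝ) hA'.eigenvectorUnitary
  simp only [exp_smul_eq_conj_diagonal hA']
  exact ⟨_, ((hφ.comp continuous_id.matrix_diagonal).tendsto _).comp <| tendsto_pi_nhds.2 fun i =>
    Real.tendsto_exp_mul_atTop_of_nonpos (hA'.eigenvalues_nonpos hA i)⟩

section Flow

variable {A : Matrix m m ℝ} {x y : m → ℝ}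

theorem exists_tendsto_exp_smul_mulVec (hA : (-A).PosSemidef) (x : m → ℝ) :
    ∃ y, Tendsto (fun t : ℝ => NormedSpace.exp (t • A) *ᵥ x) atTop (𝓝 y) :=
  let ⟨P, hP⟩ := exists_tendsto_exp_smul hA
  ⟨P *ᵥ x, ((continuous_id.matrix_mulVec continuous_const).tendsto P).comp hP⟩

theorem exp_smul_mulVec_eq_self_of_tendsto
    (hy : Tendsto (fun t : ℝ => NormedSpace.exp (t • A) *ᵥ x) atTop (𝓝 y)) (s : ℝ) :
    NormedSpace.exp (s • A) *ᵥ y = y := by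
  have hshift : Tendsto (fun t : ℝ => NormedSpace.exp (s • A) *ᵥ (NormedSpace.exp (t • A) *ᵥ x))
      atTop (𝓝 y) := by
    refine (hy.comp (tendsto_atTop_add_const_right atTop s tendsto_id)).congr fun t => ?_
    rw [Function.comp_apply, id, mulVec_mulVec,
      ← exp_add_of_commute _ _ (((Commute.refl A).smul_left s).smul_right t), add_smul, add_comm]
  exact tendsto_nhds_unique
    (((continuous_const.matrix_mulVec continuous_id).tendsto y).comp hy) hshift

theorem mulVec_eq_zero_of_tendsto_exp_smul_mulVec
    (hy : Tendsto (fun t : ℝ => NormedSpace.exp (t • A) *ᵥ x) atTop (𝓝 y)) : A *ᵥ y = 0 := by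
  have hconst : HasDerivAt (fun s : ℝ => NormedSpace.exp (s • A) *ᵥ y) 0 0 := by
    simpa only [exp_smul_mulVec_eq_self_of_tendsto hy] using hasDerivAt_const (0 : ℝ) y
  simpa using (hasDerivAt_exp_smul_mulVec A y 0).unique hconst

theorem sub_dotProduct_eq_zero_of_tendsto_exp_smul_mulVec (hA : A.IsSymm)
    (hy : Tendsto (fun t : ℝ => NormedSpace.exp (t • A) *ᵥ x) atTop (𝓝 y))
    {w : m → ℝ} (hw : A *ᵥ w = 0) : (x - y) ⬝ᵥ w = 0 := by
  have hinv (t : ℝ) : (NormedSpace.exp (t • A) *ᵥ x) ⬝ᵥ w = x ⬝ᵥ w := by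
    rw [dotProduct_comm, dotProduct_mulVec, ← mulVec_transpose, ((hA.smul t).exp).eq,
      exp_smul_mulVec_eq_self hw, dotProduct_comm]
  have hlim := ((continuous_id.dotProduct (continuous_const (y := w))).tendsto y).comp hy
  simp only [Function.comp_def, id, hinv] at hlim
  rw [sub_dotProduct, tendsto_nhds_unique tendsto_const_nhds hlim, sub_self]

theorem mulVec_eq_zero_of_tendsto_exp_smul_mulVec_of_commute {B : Matrix m m ℝ}
    (hAB : Commute A B) (hx : A *ᵥ x = 0)
    (hy : Tendsto (fun t : ℝ => NormedSpace.exp (t • B) *ᵥ x) atTop (𝓝 y)) : A *ᵥ y = 0 := by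
  have hflow (t : ℝ) : A *ᵥ (NormedSpace.exp (t • B) *ᵥ x) = 0 := by
    rw [mulVec_mulVec, ((hAB.smul_right t).exp_right).eq, ← mulVec_mulVec, hx, mulVec_zero]
  exact (isClosed_eq (continuous_const.matrix_mulVec continuous_id) continuous_const).mem_of_tendsto
    hy (.of_forall hflow)

theorem tendsto_exp_smul_mulVec_of_sub_dotProduct_eq_zero (hA : A.IsSymm)
    (hA' : (-A).PosSemidef) (hy : A *ᵥ y = 0) (hperp : ∀ w, A *ᵥ w = 0 → (x - y) ⬝ᵥ w = 0) :
    Tendsto (fun t : ℝ => NormedSpace.exp (t • A) *ᵥ x) atTop (𝓝 y) := by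
  obtain ⟨L, hL⟩ := exists_tendsto_exp_smul_mulVec hA' x
  have hLy : L = y := eq_of_forall_sub_dotProduct_eq_zero (K := LinearMap.ker A.mulVecLin)
    (mulVec_eq_zero_of_tendsto_exp_smul_mulVec hL) hy
    (fun _ hw => sub_dotProduct_eq_zero_of_tendsto_exp_smul_mulVec hA hL hw) hperp
  rwa [← hLy]

end Flow

end Matrix

theorem stmt_7 (n : ℕ) (α β : Matrix (Fin n) (Fin n) ℝ)
    (hα : αᵀ = α) (hβ : βᵀ = β) (hcomm : α * β = β * α)
    (hαneg : (-α).PosSemidef) (hβneg : (-β).PosSemidef)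
    (x y z : Fin n → ℝ)
    (hy : Tendsto (fun t : ℝ => (NormedSpace.exp (t • α)).mulVec x) atTop (nhds y))
    (hz : Tendsto (fun t : ℝ => (NormedSpace.exp (t • β)).mulVec y) atTop (nhds z)) :
    (α.mulVec z = 0 ∧ β.mulVec z = 0 ∧
      ∀ w : Fin n → ℝ, α.mulVec w = 0 → β.mulVec w = 0 → (x - z) ⬝ᵥ w = 0) ∧
    Tendsto (fun t : ℝ => (NormedSpace.exp (t • (α + β))).mulVec x) atTop (nhds z) := by
  have hαz := mulVec_eq_zero_of_tendsto_exp_smul_mulVec_of_commute hcomm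
    (mulVec_eq_zero_of_tendsto_exp_smul_mulVec hy) hz
  have hβz := mulVec_eq_zero_of_tendsto_exp_smul_mulVec hz
  have hz_perp (w : Fin n → ℝ) (hαw : α *ᵥ w = 0) (hβw : β *ᵥ w = 0) : (x - z) ⬝ᵥ w = 0 := by
    rw [← sub_add_sub_cancel x y z, add_dotProduct,
      sub_dotProduct_eq_zero_of_tendsto_exp_smul_mulVec hα hy hαw,
      sub_dotProduct_eq_zero_of_tendsto_exp_smul_mulVec hβ hz hβw, add_zero]
  refine ⟨⟨hαz, hβz, hz_perp⟩, ?_⟩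
  have hker (w : Fin n → ℝ) (hw : (α + β) *ᵥ w = 0) : α *ᵥ w = 0 ∧ β *ᵥ w = 0 := by
    simpa only [neg_mulVec, neg_eq_zero] using
      (hαneg.add_mulVec_eq_zero_iff hβneg).mp (by rw [← neg_add, neg_mulVec, hw, neg_zero])
  exact tendsto_exp_smul_mulVec_of_sub_dotProduct_eq_zero (IsSymm.add hα hβ)
    (by simpa only [neg_add] using hαneg.add hβneg) (by rw [add_mulVec, hαz, hβz, add_zero])
    fun w hw => hz_perp w (hker w hw).1 (hker w hw).2
end

section
/- Let 𝔞 be a finite-dimensional real vector space and for each α ∈ 𝔞 let F(α) ⊆ X be defined by fixed-point data such that: (i) F(α+εβ) = F(α) ∩ F(β) for all commuting pairs with 0 < ε < δ(α,β) for some δ(α,β) > 0, and (ii) for a basis α₁,…,αₙ, F_A := F(α₁) ∩ ⋯ ∩ F(αₙ). Then for every nonzero α ∈ 𝔞 and every neighborhood U of α in 𝔞 there exists β ∈ U with F(β) = F_A. -/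
/-!
Fix a point `x` and look at the set of `α` with `x ∈ F α`. The shrinking property forces it to
be stable under positive scaling, negation and addition; for addition, `t ↦ F (v + t • w) ∩ F w`
is locally constant on `ℝ`, hence constant. So it is a linear subspace as soon as it is nonempty,
and `F_A ⊆ F α` for every `α`. Conversely, perturbing `α` successively by small positive multiples
of the basis vectors gives `β` arbitrarily close to `α` with `F β = F α ∩ F_A = F_A`.
-/

open Filter Topology Set

theorem isLocallyConstant_of_eventually_nhdsGT_zero {Y : Type*} {g : ℝ → Y}
    (h : ∀ t, ∀ᶠ ε in 𝓝[>] (0 : ℝ), g (t + ε) = g t ∧ g (t - ε) = g t) :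
    IsLocallyConstant g := by
  refine (IsLocallyConstant.iff_eventually_eq g).2 fun t => ?_
  have hR : ∀ᶠ y in 𝓝[>] t, g y = g t := by
    simpa using (eventually_map (m := (t + ·)) (P := (g · = g t))).2 ((h t).mono fun _ h => h.1)
  have hL : ∀ᶠ y in 𝓝[<] t, g y = g t := by
    have hneg : ∀ᶠ ε in 𝓝[>] (-0 : ℝ), g (t - ε) = g t := by
      simpa using (h t).mono fun _ h => h.2
    have hneg' : ∀ᶠ ε in 𝓝[<] (0 : ℝ), g (t + ε) = g t := by
      simpa using tendsto_neg_nhdsLT.eventually hneg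
    simpa using (eventually_map (m := (t + ·)) (P := (g · = g t))).2 hneg'
  rw [← nhdsNE_sup_pure, ← nhdsLT_sup_nhdsGT]
  exact eventually_sup.2 ⟨eventually_sup.2 ⟨hL, hR⟩, eventually_pure.2 rfl⟩

def ShrinkingFixedPoints {𝔞 X : Type*} [AddCommGroup 𝔞] [Module ℝ 𝔞] (F : 𝔞 → Set X) : Prop :=
  ∀ α β : 𝔞, ∃ δ > (0 : ℝ), ∀ ε : ℝ, 0 < ε → ε < δ → F (α + ε • β) = F α ∩ F β

namespace ShrinkingFixedPoints

variable {𝔞 X : Type*} [AddCommGroup 𝔞] [Module ℝ 𝔞] {F : 𝔞 → Set X}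

theorem eventually_eq_inter (hF : ShrinkingFixedPoints F) (α β : 𝔞) :
    ∀ᶠ ε in 𝓝[>] (0 : ℝ), F (α + ε • β) = F α ∩ F β := by
  obtain ⟨δ, hδ, h⟩ := hF α β
  filter_upwards [Ioo_mem_nhdsGT hδ] with ε hε using h ε hε.1 hε.2

theorem subset_zero (hF : ShrinkingFixedPoints F) (α : 𝔞) : F α ⊆ F 0 := by
  obtain ⟨ε, hε⟩ := (hF.eventually_eq_inter α 0).exists
  rw [smul_zero, add_zero] at hε
  exact hε.trans_subset inter_subset_right

theorem eventually_smul_eq (hF : ShrinkingFixedPoints F) (v : 𝔞) :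
    ∀ᶠ ε in 𝓝[>] (0 : ℝ), F (ε • v) = F v := by
  filter_upwards [hF.eventually_eq_inter 0 v] with ε hε
  rw [← zero_add (ε • v), hε, inter_eq_right.2 (hF.subset_zero v)]

theorem smul_of_pos (hF : ShrinkingFixedPoints F) {c : ℝ} (hc : 0 < c) (v : 𝔞) :
    F (c • v) = F v := by
  obtain ⟨ε, hv, hcv⟩ := ((eventually_nhdsGT_zero_mul_left hc (hF.eventually_smul_eq v)).and
    (hF.eventually_smul_eq (c • v))).exists
  rw [← hcv, smul_smul, mul_comm, hv]

theorem neg (hF : ShrinkingFixedPoints F) (v : 𝔞) : F (-v) = F v := by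
  have subset_neg : ∀ v : 𝔞, F v ⊆ F (-v) := fun v => by
    obtain ⟨ε, hε, hε1⟩ :=
      ((hF.eventually_eq_inter v (-v)).and (Ioo_mem_nhdsGT one_pos)).exists
    have hv : v + ε • -v = (1 - ε) • v := by rw [smul_neg, sub_smul, one_smul, sub_eq_add_neg]
    rw [hv, hF.smul_of_pos (sub_pos.2 hε1.2)] at hε
    exact hε.trans_subset inter_subset_right
  exact Subset.antisymm (by simpa using subset_neg (-v)) (subset_neg v)

theorem add_inter (hF : ShrinkingFixedPoints F) (v w : 𝔞) : F (v + w) ∩ F w = F v ∩ F w := by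
  have hg : IsLocallyConstant fun t : ℝ => F (v + t • w) ∩ F w := by
    refine isLocallyConstant_of_eventually_nhdsGT_zero fun t => ?_
    filter_upwards [hF.eventually_eq_inter (v + t • w) w,
      hF.eventually_eq_inter (v + t • w) (-w)] with ε hpos hneg
    constructor
    · rw [add_smul, ← add_assoc, hpos, inter_assoc, inter_self]
    · have hv : v + (t - ε) • w = v + t • w + ε • -w := by rw [smul_neg, sub_smul]; abel
      rw [hv, hneg, hF.neg, inter_assoc, inter_self]
  simpa using hg.apply_eq_of_preconnectedSpace 1 0

theorem inter_subset_add (hF : ShrinkingFixedPoints F) (v w : 𝔞) : F v ∩ F w ⊆ F (v + w) := by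
  rw [← hF.add_inter]
  exact inter_subset_left

theorem subset_smul (hF : ShrinkingFixedPoints F) (c : ℝ) (v : 𝔞) : F v ⊆ F (c • v) := by
  rcases lt_trichotomy c 0 with hc | rfl | hc
  · rw [← neg_neg c, neg_smul, hF.neg, hF.smul_of_pos (neg_pos.2 hc)]
  · rw [zero_smul]
    exact hF.subset_zero v
  · rw [hF.smul_of_pos hc]

theorem mem_of_mem_span (hF : ShrinkingFixedPoints F) {s : Set 𝔞} (hs : s.Nonempty) {x : X}
    (hx : ∀ v ∈ s, x ∈ F v) {w : 𝔞} (hw : w ∈ Submodule.span ℝ s) : x ∈ F w := by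
  induction hw using Submodule.span_induction with
  | mem v hv => exact hx v hv
  | zero => exact hF.subset_zero _ (hx _ hs.some_mem)
  | add v w _ _ hv hw => exact hF.inter_subset_add v w ⟨hv, hw⟩
  | smul c v _ hv => exact hF.subset_smul c v hv

theorem iInter_basis_subset (hF : ShrinkingFixedPoints F) {ι : Type*} [Nonempty ι]
    (b : Module.Basis ι ℝ 𝔞) (α : 𝔞) : ⋂ i, F (b i) ⊆ F α := fun _ hx =>
  hF.mem_of_mem_span (range_nonempty b) (forall_mem_range.2 (mem_iInter.1 hx))
    (b.span_eq ▸ Submodule.mem_top)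

theorem exists_mem_nhds_eq_inter_biInter [TopologicalSpace 𝔞] [ContinuousAdd 𝔞]
    [ContinuousSMul ℝ 𝔞] (hF : ShrinkingFixedPoints F) {ι : Type*} (v : ι → 𝔞) (s : Finset ι)
    (γ : 𝔞) {U : Set 𝔞} (hU : U ∈ 𝓝 γ) : ∃ β ∈ U, F β = F γ ∩ ⋂ i ∈ s, F (v i) := by
  classical
  induction s using Finset.induction_on generalizing γ U with
  | empty => exact ⟨γ, mem_of_mem_nhds hU, by simp⟩
  | insert a s _ ih =>
    obtain ⟨V, hVU, hVopen, hγV⟩ := mem_nhds_iff.1 hU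
    have hnear : ∀ᶠ ε in 𝓝[>] (0 : ℝ), γ + ε • v a ∈ V := by
      have : Tendsto (fun ε : ℝ => γ + ε • v a) (𝓝 0) (𝓝 γ) := by
        simpa using tendsto_const_nhds.add ((tendsto_id (x := 𝓝 (0 : ℝ))).smul_const (v a))
      exact (this.mono_left nhdsWithin_le_nhds).eventually (hVopen.mem_nhds hγV)
    obtain ⟨ε, hεV, hε⟩ := (hnear.and (hF.eventually_eq_inter γ (v a))).exists
    obtain ⟨β, hβV, hβ⟩ := ih _ (hVopen.mem_nhds hεV)
    refine ⟨β, hVU hβV, ?_⟩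
    rw [hβ, hε, Finset.set_biInter_insert, inter_assoc]

end ShrinkingFixedPoints

theorem stmt_9 (𝔞 : Type*) [NormedAddCommGroup 𝔞] [NormedSpace ℝ 𝔞]
    (X : Type*) (n : ℕ) (F : 𝔞 → Set X) (b : Module.Basis (Fin n) ℝ 𝔞)
    (hF : ∀ α β : 𝔞, ∃ δ > (0 : ℝ), ∀ ε : ℝ, 0 < ε → ε < δ →
      F (α + ε • β) = F α ∩ F β) :
    ∀ α : 𝔞, α ≠ 0 → ∀ U ∈ nhds α, ∃ β ∈ U, F β = ⋂ i, F (b i) := by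
  intro α hα U hU
  have hF : ShrinkingFixedPoints F := hF
  have : Nontrivial 𝔞 := nontrivial_of_ne α 0 hα
  have : Nonempty (Fin n) := b.index_nonempty
  obtain ⟨β, hβU, hβ⟩ := hF.exists_mem_nhds_eq_inter_biInter b Finset.univ α hU
  refine ⟨β, hβU, ?_⟩
  simpa [hβ] using hF.iInter_basis_subset b α
end

section
/- Let α₁,…,αₙ be commuting symmetric real m×m matrices. Then the set of coefficient vectors (c₁,…,cₙ) ∈ ℝⁿ such that ker(c₁α₁+⋯+cₙαₙ) = ker α₁ ∩ ⋯ ∩ ker αₙ is dense in ℝⁿ. -/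
/-!
Simultaneously diagonalize: `ℝᵐ` is the orthogonal sum of the joint eigenspaces `E_χ` of the `αᵢ`
(`χ ∈ ℝⁿ`), and only finitely many of them are nonzero. On `E_χ` the combination `∑ cᵢ αᵢ` acts as
the scalar `c ⬝ᵥ χ`. So if `c` avoids the finitely many hyperplanes `c ⬝ᵥ χ = 0` with `χ ≠ 0` and
`E_χ ≠ 0`, the range of the symmetric operator `∑ cᵢ αᵢ` contains every `E_χ` with `χ ≠ 0`, and its
kernel, the orthogonal complement of the range, is `E_0 = ⋂ ker αᵢ`. By Baire, the complement of
countably many hyperplanes is dense.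
-/

open Matrix Module.End

theorem Submodule.dense_compl {𝕜 M : Type*} [NontriviallyNormedField 𝕜] [AddCommGroup M]
    [TopologicalSpace M] [ContinuousAdd M] [Module 𝕜 M] [ContinuousSMul 𝕜 M]
    (p : Submodule 𝕜 M) (hp : p ≠ ⊤) : Dense (p : Set M)ᶜ := by
  have := NormedField.nhdsWithin_isUnit_neBot (α := 𝕜)
  rw [← interior_eq_empty_iff_dense_compl, ← Set.not_nonempty_iff_eq_empty]
  exact fun h => hp (p.eq_top_of_nonempty_interior' h)

theorem dense_setOf_forall_dotProduct_ne_zero {ι : Type*} [Fintype ι] {S : Set (ι → ℝ)}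
    (hS : S.Countable) (hS0 : 0 ∉ S) : Dense {c : ι → ℝ | ∀ χ ∈ S, c ⬝ᵥ χ ≠ 0} := by
  have hset : {c : ι → ℝ | ∀ χ ∈ S, c ⬝ᵥ χ ≠ 0} = ⋂ χ ∈ S, {c | c ⬝ᵥ χ ≠ 0} := by
    ext; simp
  rw [hset]
  refine dense_biInter_of_isOpen (fun χ _ => isOpen_ne_fun (by fun_prop) continuous_const) hS
    fun χ hχ => ?_
  refine (LinearMap.ker ((dotProductBilin ℝ ℝ).flip χ)).dense_compl fun htop => ?_
  have hχχ : χ ⬝ᵥ χ = 0 := LinearMap.mem_ker.1 (htop ▸ Submodule.mem_top : χ ∈ _)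
  exact hS0 (dotProduct_self_eq_zero.1 hχχ ▸ hχ)

theorem Submodule.orthogonal_eq_of_le_of_sup_eq_top {𝕜 E : Type*} [RCLike 𝕜]
    [NormedAddCommGroup E] [InnerProductSpace 𝕜 E] {K U : Submodule 𝕜 E}
    (hKU : K ≤ Uᗮ) (hsup : K ⊔ U = ⊤) : Uᗮ = K :=
  calc Uᗮ = Uᗮ ⊓ (U ⊔ K) := by rw [sup_comm, hsup, inf_top_eq]
    _ = Uᗮ ⊓ U ⊔ K := (inf_sup_assoc_of_le _ hKU).symm
    _ = K := by rw [inf_comm, Submodule.inf_orthogonal_eq_bot, bot_sup_eq]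

theorem Module.End.finite_setOf_iInf_eigenspace_ne_bot {K V ι : Type*} [Field K]
    [AddCommGroup V] [Module K V] [FiniteDimensional K V] [Finite ι] (T : ι → End K V) :
    {χ : ι → K | ⨅ i, eigenspace (T i) (χ i) ≠ ⊥}.Finite := by
  refine (Set.Finite.pi' fun i => finite_hasEigenvalue (T i)).subset fun χ hχ i => ?_
  exact fun hbot => hχ (le_bot_iff.1 (hbot ▸ iInf_le _ i))

theorem Module.End.sum_smul_apply_of_mem_iInf_eigenspace {R M ι : Type*} [CommRing R]
    [AddCommGroup M] [Module R M] [Fintype ι] {T : ι → End R M} (c : ι → R) {χ : ι → R}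
    {v : M} (hv : v ∈ ⨅ i, eigenspace (T i) (χ i)) :
    (∑ i, c i • T i) v = (c ⬝ᵥ χ) • v := by
  have hTv : ∀ i, T i v = χ i • v := fun i => mem_eigenspace_iff.1 (Submodule.mem_iInf _ |>.1 hv i)
  simp only [LinearMap.sum_apply, LinearMap.smul_apply, hTv, smul_smul, dotProduct,
    Finset.sum_smul]

namespace LinearMap.IsSymmetric

variable {E ι : Type*} [NormedAddCommGroup E] [InnerProductSpace ℝ E] [FiniteDimensional ℝ E]
  {T : ι → E →ₗ[ℝ] E}

theorem orthogonal_iSup_iInf_eigenspace_ne_zero (hT : ∀ i, (T i).IsSymmetric)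
    (hC : Pairwise (Function.onFun Commute T)) :
    (⨆ (χ : ι → ℝ) (_ : χ ≠ 0), ⨅ i, eigenspace (T i) (χ i))ᗮ = ⨅ i, LinearMap.ker (T i) := by
  have hzero : (⨅ i, eigenspace (T i) ((0 : ι → ℝ) i)) = ⨅ i, LinearMap.ker (T i) := by
    simp only [Pi.zero_apply, eigenspace_zero]
  rw [← hzero]
  refine Submodule.orthogonal_eq_of_le_of_sup_eq_top ?_ ?_
  · refine Submodule.isOrtho_comm.mp (iSup₂_le fun χ hχ w hw => ?_)
    exact (Submodule.mem_orthogonal _ _).2 fun z hz =>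
      (orthogonalFamily_iInf_eigenspaces hT) (Ne.symm hχ) ⟨z, hz⟩ ⟨w, hw⟩
  · rw [← iSup_split_single (fun χ : ι → ℝ => ⨅ i, eigenspace (T i) (χ i)) 0]
    exact iSup_iInf_eq_top_of_commute hT hC

theorem ker_sum_smul_eq_iInf_ker [Fintype ι] (hT : ∀ i, (T i).IsSymmetric)
    (hC : Pairwise (Function.onFun Commute T)) (c : ι → ℝ)
    (hc : ∀ χ ≠ 0, ⨅ i, eigenspace (T i) (χ i) ≠ ⊥ → c ⬝ᵥ χ ≠ 0) :
    LinearMap.ker (∑ i, c i • T i) = ⨅ i, LinearMap.ker (T i) := by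
  have hsym : (∑ i, c i • T i).IsSymmetric :=
    isSymmetric_sum _ fun i _ => (hT i).smul (conj_trivial (c i))
  have hrange : (⨆ (χ : ι → ℝ) (_ : χ ≠ 0), ⨅ i, eigenspace (T i) (χ i)) ≤
      LinearMap.range (∑ i, c i • T i) := by
    refine iSup₂_le fun χ hχ => ?_
    by_cases hbot : ⨅ i, eigenspace (T i) (χ i) = ⊥
    · exact hbot ▸ bot_le
    intro v hv
    refine ⟨(c ⬝ᵥ χ)⁻¹ • v, ?_⟩
    rw [map_smul, sum_smul_apply_of_mem_iInf_eigenspace c hv, smul_smul,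
      inv_mul_cancel₀ (hc χ hχ hbot), one_smul]
  refine le_antisymm ?_ fun v hv => ?_
  · rw [← hsym.orthogonal_range, ← orthogonal_iSup_iInf_eigenspace_ne_zero hT hC]
    exact Submodule.orthogonal_le hrange
  · simp_all [Submodule.mem_iInf]

end LinearMap.IsSymmetric

theorem Matrix.ker_mulVecLin_eq_comap_ker_toLpLin {R m n : Type*} [CommRing R] [Fintype n]
    [DecidableEq n] (p q : ENNReal) (A : Matrix m n R) :
    LinearMap.ker A.mulVecLin =
      (LinearMap.ker (toLpLin p q A)).comap (WithLp.linearEquiv p R (n → R)).symm.toLinearMap := by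
  ext x
  simp [toLpLin_apply]

theorem stmt_10 (n m : ℕ) (α : Fin n → Matrix (Fin m) (Fin m) ℝ)
    (hsym : ∀ i, (α i)ᵀ = α i)
    (hcomm : ∀ i j, α i * α j = α j * α i) :
    Dense {c : Fin n → ℝ |
      LinearMap.ker (∑ i, c i • α i).mulVecLin =
        ⨅ i, LinearMap.ker (α i).mulVecLin} := by
  set T := fun i => toEuclideanLin (α i)
  have hT : ∀ i, (T i).IsSymmetric := fun i =>
    isSymmetric_toEuclideanLin_iff.2 ((conjTranspose_eq_transpose_of_trivial _).trans (hsym i))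
  have hC : Pairwise (Function.onFun Commute T) := fun i j _ =>
    Commute.map (hcomm i j) (toLpLinAlgEquiv 2)
  refine (dense_setOf_forall_dotProduct_ne_zero
    ((finite_setOf_iInf_eigenspace_ne_bot T).sdiff (t := {0})).countable (by simp)).mono
    fun c hc => ?_
  have hker := LinearMap.IsSymmetric.ker_sum_smul_eq_iInf_ker hT hC c
    fun χ hχ hne => hc χ ⟨hne, hχ⟩
  rw [Set.mem_ofPred_eq, ker_mulVecLin_eq_comap_ker_toLpLin 2 2, map_sum]
  simp only [map_smul, ker_mulVecLin_eq_comap_ker_toLpLin 2 2 (α _), ← Submodule.comap_iInf]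
  exact congrArg _ hker
end

section
/- Let α₁,…,αₙ be commuting symmetric negative semidefinite real m×m matrices. Define P : ℝᵐ → ℝᵐ by P(x) = lim_{t→∞} exp(tαₙ)(⋯(lim_{t→∞} exp(tα₁)x)⋯). Then there exists δ > 0 such that for all 0 < ε₂,…,εₙ < δ, lim_{t→∞} exp(t(α₁ + ε₂α₂ + ⋯ + εₙαₙ))x = P(x) for every x ∈ ℝᵐ, and P is the orthogonal projection onto ker α₁ ∩ ⋯ ∩ ker αₙ. -/
/-!
For a symmetric negative semidefinite `A`, `exp (t • A) = cfc (fun x => exp (t * x)) A`, and since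
the spectrum of `A` lies in `(-∞, 0]` this tends to the spectral projection `kerProj A` onto
`ker A`, an orthogonal projection. Commuting matrices have commuting spectral projections, so the
iterated limit `P x` is killed by every `αᵢ`, while `x - P x` stays orthogonal to the common kernel
of the `αᵢ`: `P` is the orthogonal projection onto `⋂ ker αᵢ`. For positive weights `εᵢ` the kernel
of `∑ εᵢ αᵢ` is that same common kernel (a sum of nonpositive quadratic forms vanishes only if each
term does), so the flow of `∑ εᵢ αᵢ` converges to the same projection, whatever `δ` is.
-/

open Matrix Filter Topology

theorem Set.Finite.tendstoUniformlyOn {α β ι : Type*} [UniformSpace β] {l : Filter ι}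
    {F : ι → α → β} {f : α → β} {s : Set α} (hs : s.Finite)
    (h : ∀ x ∈ s, Tendsto (F · x) l (𝓝 (f x))) : TendstoUniformlyOn F f l s := fun _u hu =>
  (eventually_all_finite hs).2 fun x hx => Uniform.tendsto_nhds_right.1 (h x hx) hu

theorem Submodule.eq_of_sub_dotProduct_eq_zero {n R : Type*} [Fintype n] [Field R] [LinearOrder R]
    [IsStrictOrderedRing R] {K : Submodule R (n → R)} {x p q : n → R} (hp : p ∈ K) (hq : q ∈ K)
    (hxp : ∀ z ∈ K, (x - p) ⬝ᵥ z = 0) (hxq : ∀ z ∈ K, (x - q) ⬝ᵥ z = 0) : p = q := by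
  have hpq := K.sub_mem hp hq
  have : (p - q) ⬝ᵥ (p - q) = 0 := by
    nth_rw 1 [show p - q = (x - q) - (x - p) by abel]
    rw [sub_dotProduct, hxq _ hpq, hxp _ hpq, sub_zero]
  exact sub_eq_zero.1 (dotProduct_self_eq_zero.1 this)

namespace Matrix

variable {n : Type*}

theorem isSelfAdjoint_of_posSemidef_neg {A : Matrix n n ℝ} (hA : (-A).PosSemidef) :
    IsSelfAdjoint A := by
  simpa using hA.isHermitian.neg.isSelfAdjoint

section WeightedSum

variable {ι : Type*} [Fintype ι] {α : ι → Matrix n n ℝ} {ε : ι → ℝ}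

theorem posSemidef_neg_sum_smul (hα : ∀ i, (-α i).PosSemidef) (hε : ∀ i, 0 ≤ ε i) :
    (-∑ i, ε i • α i).PosSemidef := by
  rw [← Finset.sum_neg_distrib]
  exact posSemidef_sum _ fun i _ => by simpa only [smul_neg] using (hα i).smul (hε i)

theorem sum_smul_mulVec_eq_zero_iff [Fintype n] (hα : ∀ i, (-α i).PosSemidef) (hε : ∀ i, 0 < ε i)
    {z : n → ℝ} : (∑ i, ε i • α i) *ᵥ z = 0 ↔ ∀ i, α i *ᵥ z = 0 := by
  refine ⟨fun h i => ?_, fun h => by simp [sum_mulVec, smul_mulVec, h]⟩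
  have hq : ∀ i, ε i * (z ⬝ᵥ α i *ᵥ z) ≤ 0 := fun i =>
    mul_nonpos_of_nonneg_of_nonpos (hε i).le
      (by simpa [neg_mulVec] using (hα i).dotProduct_mulVec_nonneg z)
  have hsum : ∑ i, ε i * (z ⬝ᵥ α i *ᵥ z) = 0 := by
    simpa [sum_mulVec, smul_mulVec, dotProduct_sum] using congrArg (z ⬝ᵥ ·) h
  have hi := (Finset.sum_eq_zero_iff_of_nonpos fun i _ => hq i).1 hsum i (Finset.mem_univ i)
  simpa [neg_mulVec] using
    ((hα i).dotProduct_mulVec_zero_iff z).1 (by simpa [neg_mulVec, (hε i).ne'] using hi)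

end WeightedSum

variable [Fintype n] [DecidableEq n]

theorem nonpos_of_mem_spectrum_of_posSemidef_neg {A : Matrix n n ℝ} (hA : (-A).PosSemidef)
    {x : ℝ} (hx : x ∈ spectrum ℝ A) : x ≤ 0 := by
  have : -x ∈ spectrum ℝ (-A) := by
    rw [← spectrum.neg_eq]
    simpa using hx
  simpa using (posSemidef_iff_isHermitian_and_spectrum_nonneg.1 hA).2 this

theorem exp_eq_cfc_real_exp {A : Matrix n n ℝ} (hA : IsSelfAdjoint A) :
    NormedSpace.exp A = cfc Real.exp A := by
  -- Any norm serves to apply the normed-algebra lemma, since `NormedSpace.exp` only sees the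
  -- topology; the matrix CFC instance then has to be passed by hand.
  let : NormedRing (Matrix n n ℝ) := Matrix.linftyOpNormedRing
  let : NormedAlgebra ℝ (Matrix n n ℝ) := Matrix.linftyOpNormedAlgebra
  exact (@CFC.real_exp_eq_normedSpace_exp (Matrix n n ℝ) _ _ _
    IsHermitian.instContinuousFunctionalCalculus A hA).symm

theorem exp_smul_eq_cfc {A : Matrix n n ℝ} (hA : IsSelfAdjoint A) (t : ℝ) :
    NormedSpace.exp (t • A) = cfc (fun x => Real.exp (t * x)) A := by
  rw [exp_eq_cfc_real_exp ((IsSelfAdjoint.all t).smul hA), cfc_comp_const_mul t Real.exp A]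

noncomputable def kerProj (A : Matrix n n ℝ) : Matrix n n ℝ :=
  cfc (fun x : ℝ => if x = 0 then 1 else 0) A

variable {A : Matrix n n ℝ}

theorem tendsto_exp_smul_kerProj (hA : (-A).PosSemidef) :
    Tendsto (fun t : ℝ => NormedSpace.exp (t • A)) atTop (𝓝 (kerProj A)) := by
  simp_rw [exp_smul_eq_cfc (isSelfAdjoint_of_posSemidef_neg hA)]
  refine tendsto_cfc_fun ((finite_spectrum A).tendstoUniformlyOn fun x hx => ?_)
    (Eventually.of_forall fun t => by fun_prop)
  rcases (nonpos_of_mem_spectrum_of_posSemidef_neg hA hx).lt_or_eq with hx | rfl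
  · rw [if_neg hx.ne]
    exact Real.tendsto_exp_atBot.comp (tendsto_id.atTop_mul_const_of_neg hx)
  · simp

theorem tendsto_exp_smul_mulVec_kerProj (hA : (-A).PosSemidef) (x : n → ℝ) :
    Tendsto (fun t : ℝ => NormedSpace.exp (t • A) *ᵥ x) atTop (𝓝 (kerProj A *ᵥ x)) :=
  ((continuous_id.matrix_mulVec continuous_const).tendsto _).comp (tendsto_exp_smul_kerProj hA)

theorem transpose_kerProj : (kerProj A)ᵀ = kerProj A := by
  have h : IsSelfAdjoint (kerProj A) := cfc_predicate _ A
  rwa [IsSelfAdjoint, star_eq_conjTranspose, conjTranspose_eq_transpose_of_trivial] at h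

theorem mul_kerProj (hA : IsSelfAdjoint A) : A * kerProj A = 0 := by
  have hfin := finite_spectrum A
  calc A * kerProj A = cfc (fun x : ℝ => x * if x = 0 then 1 else 0) A := by
        rw [cfc_mul _ _ A (hfin.continuousOn _) (hfin.continuousOn _), cfc_id' ℝ A, kerProj]
    _ = 0 := (cfc_congr fun x _ => by by_cases hx : x = 0 <;> simp [hx]).trans (cfc_zero ℝ A)

-- `x⁻¹ * x` is `1` away from `0` and `0` at `0`, because `0⁻¹ = 0`.
theorem kerProj_eq_one_sub (hA : IsSelfAdjoint A) :
    kerProj A = 1 - cfc (fun x : ℝ => x⁻¹) A * A := by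
  have hfin := finite_spectrum A
  calc kerProj A = cfc (fun x : ℝ => 1 - x⁻¹ * x) A :=
        cfc_congr fun x _ => by by_cases hx : x = 0 <;> simp [hx]
    _ = 1 - cfc (fun x : ℝ => x⁻¹) A * A := by
        rw [cfc_sub _ _ A (hfin.continuousOn _) (hfin.continuousOn _), cfc_const_one ℝ A,
          cfc_mul _ _ A (hfin.continuousOn _) (hfin.continuousOn _), cfc_id' ℝ A]

theorem kerProj_mulVec_of_mulVec_eq_zero (hA : IsSelfAdjoint A) {z : n → ℝ} (hz : A *ᵥ z = 0) :
    kerProj A *ᵥ z = z := by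
  rw [kerProj_eq_one_sub hA, sub_mulVec, one_mulVec, ← mulVec_mulVec, hz, mulVec_zero, sub_zero]

theorem kerProj_mulVec_dotProduct (hA : IsSelfAdjoint A) {z : n → ℝ} (hz : A *ᵥ z = 0)
    (y : n → ℝ) : (kerProj A *ᵥ y) ⬝ᵥ z = y ⬝ᵥ z := by
  rw [dotProduct_comm, dotProduct_mulVec, ← mulVec_transpose, transpose_kerProj,
    kerProj_mulVec_of_mulVec_eq_zero hA hz, dotProduct_comm]

theorem mulVec_kerProj_mulVec (hA : IsSelfAdjoint A) (y : n → ℝ) : A *ᵥ (kerProj A *ᵥ y) = 0 := by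
  rw [mulVec_mulVec, mul_kerProj hA, zero_mulVec]

theorem kerProj_mulVec_eq (hA : IsSelfAdjoint A) {x p : n → ℝ} (hp : A *ᵥ p = 0)
    (hxp : ∀ z, A *ᵥ z = 0 → (x - p) ⬝ᵥ z = 0) : kerProj A *ᵥ x = p :=
  Submodule.eq_of_sub_dotProduct_eq_zero (K := LinearMap.ker A.mulVecLin)
    (by simpa using mulVec_kerProj_mulVec hA x) (by simpa using hp)
    (fun z hz => by
      rw [sub_dotProduct, kerProj_mulVec_dotProduct hA (by simpa using hz), sub_self])
    fun z hz => hxp z (by simpa using hz)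

theorem _root_.Commute.kerProj {B : Matrix n n ℝ} (h : Commute A B) : Commute (kerProj A) B :=
  h.cfc_real _

theorem mulVec_kerProj_mulVec_of_commute {B : Matrix n n ℝ} (h : Commute A B) {y : n → ℝ}
    (hy : B *ᵥ y = 0) : B *ᵥ (kerProj A *ᵥ y) = 0 := by
  rw [mulVec_mulVec, ← h.kerProj.eq, ← mulVec_mulVec, hy, mulVec_zero]

section KerProjChain

variable {k : ℕ} {α : Fin (k + 1) → Matrix n n ℝ} {g : Fin (k + 2) → n → ℝ}

theorem mulVec_kerProj_chain_eq_zero (hα : ∀ i, IsSelfAdjoint (α i))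
    (hcomm : ∀ i j, Commute (α i) (α j))
    (hg : ∀ i, g i.succ = kerProj (α i) *ᵥ g i.castSucc) (j : Fin (k + 1)) :
    α j *ᵥ g (Fin.last (k + 1)) = 0 := by
  suffices ∀ i : Fin (k + 2), ∀ j : Fin (k + 1), j.castSucc < i → α j *ᵥ g i = 0 from
    this _ j (Fin.castSucc_lt_last j)
  intro i
  induction i using Fin.induction with
  | zero => exact fun j hj => absurd hj (Fin.not_lt_zero _)
  | succ i ih =>
    intro j hj
    rw [hg]
    rcases (Fin.castSucc_lt_succ_iff.1 hj).lt_or_eq with hlt | rfl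
    · exact mulVec_kerProj_mulVec_of_commute (hcomm i j)
        (ih j (Fin.castSucc_lt_castSucc_iff.2 hlt))
    · exact mulVec_kerProj_mulVec (hα j) _

theorem kerProj_chain_dotProduct (hα : ∀ i, IsSelfAdjoint (α i))
    (hg : ∀ i, g i.succ = kerProj (α i) *ᵥ g i.castSucc) {z : n → ℝ} (hz : ∀ j, α j *ᵥ z = 0)
    (i : Fin (k + 2)) : g i ⬝ᵥ z = g 0 ⬝ᵥ z := by
  induction i using Fin.induction with
  | zero => rfl
  | succ i ih => rw [hg, kerProj_mulVec_dotProduct (hα i) (hz i), ih]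

end KerProjChain

end Matrix

/-- `f k` is the composite of the first `k` limit maps, so `f (Fin.last (n + 1))` is `P`. -/
theorem stmt_17_general (n m : ℕ) (α : Fin (n + 1) → Matrix (Fin m) (Fin m) ℝ)
    (hcomm : ∀ i j, α i * α j = α j * α i)
    (hneg : ∀ i, (-(α i)).PosSemidef)
    (f : Fin (n + 2) → (Fin m → ℝ) → (Fin m → ℝ))
    (hf0 : f 0 = id)
    (hf : ∀ i : Fin (n + 1), ∀ x : Fin m → ℝ,
      Tendsto (fun t : ℝ => (NormedSpace.exp (t • α i)).mulVec (f i.castSucc x))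
        atTop (nhds (f i.succ x))) :
    (∃ δ > (0 : ℝ), ∀ ε : Fin (n + 1) → ℝ, ε 0 = 1 →
      (∀ i, i ≠ 0 → 0 < ε i ∧ ε i < δ) →
      ∀ x : Fin m → ℝ,
        Tendsto (fun t : ℝ => (NormedSpace.exp (t • ∑ i, ε i • α i)).mulVec x)
          atTop (nhds (f (Fin.last (n + 1)) x))) ∧
    (∀ x : Fin m → ℝ,
      (∀ i, (α i).mulVec (f (Fin.last (n + 1)) x) = 0) ∧
      ∀ z : Fin m → ℝ, (∀ i, (α i).mulVec z = 0) →
        (x - f (Fin.last (n + 1)) x) ⬝ᵥ z = 0) := by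
  have hα i : IsSelfAdjoint (α i) := isSelfAdjoint_of_posSemidef_neg (hneg i)
  have hg x i : f i.succ x = kerProj (α i) *ᵥ f i.castSucc x :=
    tendsto_nhds_unique (hf i x) (tendsto_exp_smul_mulVec_kerProj (hneg i) _)
  have hker x : ∀ i, α i *ᵥ f (Fin.last (n + 1)) x = 0 :=
    mulVec_kerProj_chain_eq_zero (g := (f · x)) hα hcomm (hg x)
  have horth x z (hz : ∀ i, α i *ᵥ z = 0) : (x - f (Fin.last (n + 1)) x) ⬝ᵥ z = 0 := by
    rw [sub_dotProduct, kerProj_chain_dotProduct (g := (f · x)) hα (hg x) hz, hf0, id, sub_self]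
  refine ⟨⟨1, one_pos, fun ε hε0 hε x => ?_⟩, fun x => ⟨hker x, horth x⟩⟩
  have hεpos i : 0 < ε i := by
    rcases eq_or_ne i 0 with rfl | hi
    · exact hε0 ▸ one_pos
    · exact (hε i hi).1
  have hA := posSemidef_neg_sum_smul hneg fun i => (hεpos i).le
  have hker_sum {z} := sum_smul_mulVec_eq_zero_iff (z := z) hneg hεpos
  convert tendsto_exp_smul_mulVec_kerProj hA x using 2
  exact (kerProj_mulVec_eq (isSelfAdjoint_of_posSemidef_neg hA) (hker_sum.2 (hker x))
    fun z hz => horth x z (hker_sum.1 hz)).symm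

/-- Linear model of Theorem 2.8.  `f i.succ x` is the limit of the gradient flow of
`α i` starting at `f i.castSucc x`, so that `P := f (Fin.last (n+1))` is the iterated
limit map `x ↦ lim exp(t αₙ)(⋯ (lim exp(t α₁) x) ⋯)`. -/
theorem stmt_17 (n m : ℕ) (α : Fin (n + 1) → Matrix (Fin m) (Fin m) ℝ)
    (hsym : ∀ i, (α i)ᵀ = α i)
    (hcomm : ∀ i j, α i * α j = α j * α i)
    (hneg : ∀ i, (-(α i)).PosSemidef)
    (f : Fin (n + 2) → (Fin m → ℝ) → (Fin m → ℝ))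
    (hf0 : f 0 = id)
    (hf : ∀ i : Fin (n + 1), ∀ x : Fin m → ℝ,
      Tendsto (fun t : ℝ => (NormedSpace.exp (t • α i)).mulVec (f i.castSucc x))
        atTop (nhds (f i.succ x))) :
    (∃ δ > (0 : ℝ), ∀ ε : Fin (n + 1) → ℝ, ε 0 = 1 →
      (∀ i, i ≠ 0 → 0 < ε i ∧ ε i < δ) →
      ∀ x : Fin m → ℝ,
        Tendsto (fun t : ℝ => (NormedSpace.exp (t • ∑ i, ε i • α i)).mulVec x)
          atTop (nhds (f (Fin.last (n + 1)) x))) ∧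
    (∀ x : Fin m → ℝ,
      (∀ i, (α i).mulVec (f (Fin.last (n + 1)) x) = 0) ∧
      ∀ z : Fin m → ℝ, (∀ i, (α i).mulVec z = 0) →
        (x - f (Fin.last (n + 1)) x) ⬝ᵥ z = 0) :=
  stmt_17_general n m α hcomm hneg f hf0 hf
end
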